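/- Let Γ be an admissible Galois structure such that every morphism in E is a monadic extension and every covering is a normal extension. Suppose p : E → B lies in E, f : A → B is a covering of B, and h : E → A is a morphism with f ∘ h = p. Then (A, f) is split by (E, p); consequently, any reflection of (E, p) into the category Spl(E, p) of extensions split by (E, p) is also a reflection of (E, p) into the category Cov(B) of coverings of B. -/

import Mathlib

open CategoryTheory CategoryTheory.Limits

universe v u v' u'

namespace GaloisPaper

variable {C : Type u} [Category.{v} C]

/-- The class `E¹` of "double extensions" relative to a class `F` of morphisms:
a commutative square (i.e. a morphism `σ : a ⟶ b` of the arrow category) with all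
four arrows in `F`, such that the comparison morphism to the pullback lies in `F`. -/
def InE1 (F : MorphismProperty C) : MorphismProperty (Arrow C) := fun a b σ =>
  F a.hom ∧ F b.hom ∧ F σ.left ∧ F σ.right ∧
    ∃ (P : C) (p₁ : P ⟶ a.right) (p₂ : P ⟶ b.left) (l : a.left ⟶ P),
      IsPullback p₁ p₂ σ.right b.hom ∧ l ≫ p₁ = a.hom ∧ l ≫ p₂ = σ.left ∧ F l

/-- (E1): `F` contains all isomorphisms (between objects satisfying `O`). -/
def CondE1 (O : C → Prop) (F : MorphismProperty C) : Prop :=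
  ∀ ⦃a b : C⦄ (σ : a ⟶ b), O a → O b → IsIso σ → F σ

/-- (E2): `F` is pullback-stable: pullbacks of morphisms of `F` along arbitrary
morphisms (between objects satisfying `O`) exist and lie in `F`. -/
def CondE2 (O : C → Prop) (F : MorphismProperty C) : Prop :=
  ∀ ⦃a b : C⦄ (σ : a ⟶ b), F σ → ∀ ⦃c : C⦄ (g : c ⟶ b), O c →
    (∃ (d : C) (q₁ : d ⟶ a) (q₂ : d ⟶ c), O d ∧ IsPullback q₁ q₂ σ g ∧ F q₂) ∧
    (∀ ⦃d : C⦄ (q₁ : d ⟶ a) (q₂ : d ⟶ c), O d → IsPullback q₁ q₂ σ g → F q₂)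

/-- (E3): `F` is closed under composition. -/
def CondE3 (F : MorphismProperty C) : Prop :=
  ∀ ⦃a b c : C⦄ (σ : a ⟶ b) (τ : b ⟶ c), F σ → F τ → F (σ ≫ τ)

/-- (E4): if `σ ≫ τ ∈ F` then `τ ∈ F`. -/
def CondE4 (O : C → Prop) (F : MorphismProperty C) : Prop :=
  ∀ ⦃a b c : C⦄ (σ : a ⟶ b) (τ : b ⟶ c), O a → O b → O c → F (σ ≫ τ) → F τ

/-- (E5): every split epimorphism of `Ext(C)` (i.e. every morphism of the arrow
category between `F`-arrows admitting a section) lies in `F¹`. -/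
def CondE5 (F : MorphismProperty C) : Prop :=
  ∀ ⦃a b : Arrow C⦄ (σ : a ⟶ b) (τ : b ⟶ a), τ ≫ σ = 𝟙 b → F a.hom → F b.hom → InE1 F σ

/-- `(C ↓ B)`: the full subcategory of `Over B` on morphisms in `F`. -/
def EOver (F : MorphismProperty C) (B : C) :=
  ObjectProperty.FullSubcategory (fun f : Over B => F f.hom)

instance (F : MorphismProperty C) (B : C) : Category (EOver F B) :=
  ObjectProperty.FullSubcategory.category _

/-- `Σ_p`: composition with `p`, as a functor `(C ↓ A) ⥤ (C ↓ B)`. -/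
def eMap (F : MorphismProperty C) {A B : C} (p : A ⟶ B)
    (hcomp : ∀ ⦃Z : C⦄ (f : Z ⟶ A), F f → F (f ≫ p)) : EOver F A ⥤ EOver F B :=
  ObjectProperty.lift _ (ObjectProperty.ι _ ⋙ Over.map p)
    (fun f => hcomp f.obj.hom f.property)

/-- `p` is a monadic extension (effective `F`-descent morphism): `p ∈ F` and the
pullback functor `p* : (C ↓ B) ⥤ (C ↓ A)` (i.e. the right adjoint of `Σ_p`) is monadic. -/
def IsMonadicExt (F : MorphismProperty C) {A B : C} (p : A ⟶ B) : Prop :=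
  F p ∧ ∃ (hcomp : ∀ ⦃Z : C⦄ (f : Z ⟶ A), F f → F (f ≫ p))
    (G : EOver F B ⥤ EOver F A) (_ : eMap F p hcomp ⊣ G),
    Nonempty (MonadicRightAdjoint G)

/-- `u : e ⟶ r` exhibits `r` as a reflection of `e` into the full subcategory
determined by `P`. -/
def IsReflectionInto {D : Type u'} [Category.{v'} D] (P : D → Prop) {e r : D}
    (u : e ⟶ r) : Prop :=
  P r ∧ ∀ ⦃a : D⦄, P a → ∀ k : e ⟶ a, ∃! m : r ⟶ a, u ≫ m = k

/-- A Galois structure `(C, X, H, I, η, E)` as in Janelidze–Kelly: a full replete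
reflective subcategory together with a class `E` satisfying (E1)–(E3) and (G). -/
structure GaloisStructure (C : Type u) [Category.{v} C] (X : Type u') [Category.{v'} X] where
  H : X ⥤ C
  I : C ⥤ X
  adj : I ⊣ H
  hFull : H.Full
  hFaithful : H.Faithful
  E : MorphismProperty C
  hE1 : CondE1 (fun _ => True) E
  hE2 : CondE2 (fun _ => True) E
  hE3 : CondE3 E
  hG : ∀ ⦃A B : C⦄ (f : A ⟶ B), E f → E (H.map (I.map f))

namespace GaloisStructure

variable {X : Type u'} [Category.{v'} X] (Γ : GaloisStructure C X)

/-- The component `η_A : A ⟶ HI(A)` of the reflection unit. -/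
def unitApp (A : C) : A ⟶ Γ.H.obj (Γ.I.obj A) := Γ.adj.unit.app A

/-- A trivial covering: `f ∈ E` whose `η`-naturality square is a pullback. -/
def TrivCov {A B : C} (f : A ⟶ B) : Prop :=
  Γ.E f ∧ IsPullback (Γ.unitApp A) f (Γ.H.map (Γ.I.map f)) (Γ.unitApp B)

/-- `f` is split by `p`: the pullback `p*(f)` of `f` along `p` is a trivial covering. -/
def IsSplitBy {A B E' : C} (f : A ⟶ B) (p : E' ⟶ B) : Prop :=
  ∀ ⦃P : C⦄ (p₁ : P ⟶ A) (p₂ : P ⟶ E'), IsPullback p₁ p₂ f p → Γ.TrivCov p₂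

/-- A covering (central extension): a morphism of `E` split by some monadic extension. -/
def Covering {A B : C} (f : A ⟶ B) : Prop :=
  Γ.E f ∧ ∃ (E' : C) (p : E' ⟶ B), IsMonadicExt Γ.E p ∧ Γ.IsSplitBy f p

/-- A normal extension: a monadic extension split by itself. -/
def NormalExt {A B : C} (p : A ⟶ B) : Prop :=
  IsMonadicExt Γ.E p ∧ Γ.IsSplitBy p p

/-- (M): every morphism of `E` is a monadic extension. -/
def CondM : Prop := ∀ ⦃A B : C⦄ (p : A ⟶ B), Γ.E p → IsMonadicExt Γ.E p

/-- Admissibility of the Galois structure: the right adjoints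
`H^B : (X ↓ I(B)) ⥤ (C ↓ B)` are fully faithful.  Equivalently (and this is how we
state it), for every `φ : x ⟶ I(B)` with `H(φ) ∈ E` and every pullback of `H(φ)`
along `η_B`, the corresponding component of the counit of `I^B ⊣ H^B`, i.e. the
adjoint transpose `I(A) ⟶ x` of `t : A ⟶ H(x)`, is an isomorphism. -/
def Admissible : Prop :=
  ∀ ⦃B : C⦄ ⦃x : X⦄ (φ : x ⟶ Γ.I.obj B), Γ.E (Γ.H.map φ) →
    ∀ ⦃A : C⦄ (t : A ⟶ Γ.H.obj x) (f : A ⟶ B),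
      IsPullback t f (Γ.H.map φ) (Γ.unitApp B) →
      IsIso ((Γ.adj.homEquiv A x).symm t)

/-- The `η`-naturality square at `f`, as a morphism of the arrow category. -/
def unitSq {A B : C} (f : A ⟶ B) : Arrow.mk f ⟶ Arrow.mk (Γ.H.map (Γ.I.map f)) :=
  Arrow.homMk (u := Γ.unitApp A) (v := Γ.unitApp B)
    (by simp [unitApp])

/-- (B): `X` is a strongly `E`-Birkhoff subcategory of `C`: every `η`-naturality
square at a morphism of `E` lies in `E¹`. -/
def StronglyBirkhoff : Prop :=
  ∀ ⦃A B : C⦄ (f : A ⟶ B), Γ.E f → InE1 Γ.E (Γ.unitSq f)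

/-- `I` preserves pullbacks of morphisms of `E` along split epimorphisms of `E`. -/
def PreservesSplitPullbacks : Prop :=
  ∀ ⦃D' A B C' : C⦄ (t : D' ⟶ A) (h : D' ⟶ C') (f : A ⟶ B) (g : C' ⟶ B),
    IsPullback t h f g → Γ.E f → Γ.E g → IsSplitEpi g →
    IsPullback (Γ.I.map t) (Γ.I.map h) (Γ.I.map f) (Γ.I.map g)

end GaloisStructure

/-- The class of regular epimorphisms. -/
def regEpi (C : Type u) [Category.{v} C] : MorphismProperty C :=
  fun _ _ f => Nonempty (RegularEpi f)

/-- A pair of parallel morphisms is jointly monic. -/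
def JointlyMono {R A : C} (d₀ d₁ : R ⟶ A) : Prop :=
  ∀ ⦃T : C⦄ (x y : T ⟶ R), x ≫ d₀ = y ≫ d₀ → x ≫ d₁ = y ≫ d₁ → x = y

/-- An internal reflexive relation (given by its jointly monic pair of projections). -/
def IsReflexiveRel {R A : C} (d₀ d₁ : R ⟶ A) : Prop :=
  JointlyMono d₀ d₁ ∧ ∃ r : A ⟶ R, r ≫ d₀ = 𝟙 A ∧ r ≫ d₁ = 𝟙 A

/-- An internal equivalence relation. -/
def IsEquivRel {R A : C} (d₀ d₁ : R ⟶ A) : Prop :=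
  IsReflexiveRel d₀ d₁ ∧ (∃ s : R ⟶ R, s ≫ d₀ = d₁ ∧ s ≫ d₁ = d₀) ∧
    ∀ ⦃T : C⦄ (x y : T ⟶ R), x ≫ d₁ = y ≫ d₀ →
      ∃ t : T ⟶ R, t ≫ d₀ = x ≫ d₀ ∧ t ≫ d₁ = y ≫ d₁

/-- A Mal'tsev category: every internal reflexive relation is an equivalence relation. -/
def IsMaltsevCat (C : Type u) [Category.{v} C] : Prop :=
  ∀ ⦃A R : C⦄ (d₀ d₁ : R ⟶ A), IsReflexiveRel d₀ d₁ → IsEquivRel d₀ d₁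

/-- A regular category: finite limits (assumed separately), regular epi–mono
factorisations, and pullback-stability of regular epimorphisms. -/
structure IsRegularCategory (C : Type u) [Category.{v} C] : Prop where
  factor : ∀ ⦃A B : C⦄ (f : A ⟶ B), ∃ (I' : C) (e : A ⟶ I') (m : I' ⟶ B),
    f = e ≫ m ∧ Nonempty (RegularEpi e) ∧ Mono m
  stable : ∀ ⦃P' X' Y' Z' : C⦄ (p₁ : P' ⟶ X') (p₂ : P' ⟶ Y') (f : X' ⟶ Z') (g : Y' ⟶ Z'),
    IsPullback p₁ p₂ f g → Nonempty (RegularEpi f) → Nonempty (RegularEpi p₂)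

/-- A Barr-exact category: regular, and every internal equivalence relation is
effective (i.e. a kernel pair). -/
def IsBarrExact (C : Type u) [Category.{v} C] : Prop :=
  IsRegularCategory C ∧ ∀ ⦃A R : C⦄ (d₀ d₁ : R ⟶ A), IsEquivRel d₀ d₁ →
    ∃ (Q : C) (q : A ⟶ Q), IsPullback d₀ d₁ q q

/-- A Birkhoff subcategory: a full reflective subcategory closed under subobjects
and regular quotient objects. -/
structure IsBirkhoff {X : Type u'} [Category.{v'} X] (H : X ⥤ C) (I : C ⥤ X)
    (adj : I ⊣ H) : Prop where
  full : H.Full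
  faithful : H.Faithful
  closedSub : ∀ (x : X) (A : C) (m : A ⟶ H.obj x), Mono m → ∃ y : X, Nonempty (A ≅ H.obj y)
  closedQuot : ∀ (x : X) (A : C) (e : H.obj x ⟶ A), Nonempty (RegularEpi e) →
    ∃ y : X, Nonempty (A ≅ H.obj y)

/-- The category `Ext(C)` of `F`-morphisms. -/
def ExtCat (F : MorphismProperty C) := ObjectProperty.FullSubcategory (fun a : Arrow C => F a.hom)

instance (F : MorphismProperty C) : Category (ExtCat F) := ObjectProperty.FullSubcategory.category _

/-- The restriction of `F¹` to the category `Ext(C)`. -/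
def ExtE1 (F : MorphismProperty C) : MorphismProperty (ExtCat F) :=
  fun _ _ σ => InE1 F ((ObjectProperty.ι _).map σ)


/-!
Since the covering `f` is a normal extension, `f*(f)` is a trivial covering, and because `p`
factors through `f`, the pullback `p*(f)` is a pullback of `f*(f)` along `h`. In an admissible
Galois structure trivial coverings are pullback-stable, because pullbacks of morphisms of the
reflective subcategory stay in it and pullbacks of them along units are trivial by
admissibility. Consequently every covering under `(E', p)` is split by `p`, and conversely
everything split by `p` is a covering because `p` is a monadic extension by (M).
-/

lemma IsReflectionInto.of_imp {D : Type u'} [Category.{v'} D] {P Q : D → Prop} {e r : D}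
    {u : e ⟶ r} (hu : IsReflectionInto P u) (hr : Q r)
    (hQP : ∀ ⦃a : D⦄, Q a → (e ⟶ a) → P a) : IsReflectionInto Q u :=
  ⟨hr, fun _ ha k => hu.2 (hQP ha k) k⟩

namespace GaloisStructure

variable {X : Type u'} [Category.{v'} X] (Γ : GaloisStructure C X)

lemma unitApp_comp_map_homEquiv_symm {A : C} {x : X} (t : A ⟶ Γ.H.obj x) :
    Γ.unitApp A ≫ Γ.H.map ((Γ.adj.homEquiv A x).symm t) = t := by
  rw [unitApp, ← Adjunction.homEquiv_unit, Equiv.apply_symm_apply]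

lemma unitApp_naturality {A B : C} (h : A ⟶ B) :
    h ≫ Γ.unitApp B = Γ.unitApp A ≫ Γ.H.map (Γ.I.map h) := by
  simp [unitApp]

lemma map_homEquiv_symm_comp {A B : C} {x : X} {t : A ⟶ Γ.H.obj x} {f : A ⟶ B}
    {φ : x ⟶ Γ.I.obj B} (w : t ≫ Γ.H.map φ = f ≫ Γ.unitApp B) :
    (Γ.adj.homEquiv A x).symm t ≫ φ = Γ.I.map f := by
  rw [← Adjunction.homEquiv_naturality_right_symm, w, unitApp,
    Adjunction.homEquiv_naturality_left_symm]
  simp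

/-- Reflective subcategories are closed under pullbacks: the universal property of the
pullback splits `η_M`. -/
lemma isIso_unitApp_of_isPullback {M : C} {x₁ x₂ z : X} {φ₁ : x₁ ⟶ z} {φ₂ : x₂ ⟶ z}
    {m₁ : M ⟶ Γ.H.obj x₁} {m₂ : M ⟶ Γ.H.obj x₂}
    (hpb : IsPullback m₁ m₂ (Γ.H.map φ₁) (Γ.H.map φ₂)) : IsIso (Γ.unitApp M) := by
  let _ : Reflective Γ.H :=
    { toFull := Γ.hFull, toFaithful := Γ.hFaithful, L := Γ.I, adj := Γ.adj }
  set ψ₁ := (Γ.adj.homEquiv M x₁).symm m₁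
  set ψ₂ := (Γ.adj.homEquiv M x₂).symm m₂
  have hw : Γ.H.map ψ₁ ≫ Γ.H.map φ₁ = Γ.H.map ψ₂ ≫ Γ.H.map φ₂ := by
    simp only [← Γ.H.map_comp]
    congr 1
    apply (Γ.adj.homEquiv M z).injective
    rw [Adjunction.homEquiv_naturality_right, Adjunction.homEquiv_naturality_right,
      Equiv.apply_symm_apply, Equiv.apply_symm_apply]
    exact hpb.w
  have hretr : Γ.unitApp M ≫ hpb.lift _ _ hw = 𝟙 M := by
    apply hpb.hom_ext
    · rw [Category.assoc, hpb.lift_fst, Category.id_comp]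
      exact Γ.unitApp_comp_map_homEquiv_symm m₁
    · rw [Category.assoc, hpb.lift_snd, Category.id_comp]
      exact Γ.unitApp_comp_map_homEquiv_symm m₂
  have : IsSplitMono ((reflectorAdjunction Γ.H).unit.app M) := IsSplitMono.mk' ⟨_, hretr⟩
  exact (mem_essImage_of_unit_isSplitMono (i := Γ.H)).unit_isIso

/-- By admissibility the transpose `I(P) ⟶ x` of `t` is invertible, and it identifies
`HI(f)` with `H(φ)`. -/
lemma trivCov_of_isPullback_unitApp (hadm : Γ.Admissible) {B P : C} {x : X}
    {φ : x ⟶ Γ.I.obj B} (hφ : Γ.E (Γ.H.map φ)) {t : P ⟶ Γ.H.obj x} {f : P ⟶ B}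
    (hpb : IsPullback t f (Γ.H.map φ) (Γ.unitApp B)) : Γ.TrivCov f := by
  have hf : Γ.E f := (Γ.hE2 _ hφ _ trivial).2 t f trivial hpb
  have := hadm φ hφ t f hpb
  set ψ := (Γ.adj.homEquiv P x).symm t
  have ht : Γ.unitApp P ≫ Γ.H.map ψ = t := Γ.unitApp_comp_map_homEquiv_symm t
  have hIf : ψ ≫ φ = Γ.I.map f := Γ.map_homEquiv_symm_comp hpb.w
  refine ⟨hf, hpb.of_iso (Iso.refl P) (Γ.H.mapIso (asIso ψ)).symm (Iso.refl B) (Iso.refl _)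
    ?_ ?_ ?_ ?_⟩
  · simp [← ht]
  · simp
  · simp [← hIf]
  · simp

lemma TrivCov.of_isPullback {Γ : GaloisStructure C X} (hadm : Γ.Admissible)
    {Q A P E' : C} {q : Q ⟶ A} (hq : Γ.TrivCov q) {l : P ⟶ Q} {p : P ⟶ E'} {h : E' ⟶ A}
    (hpb : IsPullback l p q h) : Γ.TrivCov p := by
  have hpasted : IsPullback (l ≫ Γ.unitApp Q) p (Γ.H.map (Γ.I.map q))
      (Γ.unitApp E' ≫ Γ.H.map (Γ.I.map h)) := by
    rw [← Γ.unitApp_naturality]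
    exact hpb.paste_horiz hq.2
  -- `P` is the pullback along `η_{E'}` of the pullback `M` of `HI(q)` along `HI(h)`,
  -- which lies in the reflective subcategory.
  obtain ⟨⟨M, m₁, m₂, -, hM, hm₂⟩, -⟩ :=
    Γ.hE2 _ (Γ.hG q hq.1) (Γ.H.map (Γ.I.map h)) trivial
  have := Γ.isIso_unitApp_of_isPullback hM
  set ψ := (Γ.adj.homEquiv M (Γ.I.obj E')).symm m₂
  have hm₂ψ : Γ.unitApp M ≫ Γ.H.map ψ = m₂ := Γ.unitApp_comp_map_homEquiv_symm m₂
  have hψ : Γ.E (Γ.H.map ψ) := by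
    rw [← (IsIso.inv_comp_eq _).mpr hm₂ψ.symm]
    exact Γ.hE3 _ _ (Γ.hE1 _ trivial trivial inferInstance) hm₂
  obtain ⟨t, hpbM⟩ : ∃ t, IsPullback t p m₂ (Γ.unitApp E') := ⟨_, hpasted.of_right' hM⟩
  refine Γ.trivCov_of_isPullback_unitApp hadm hψ (t := t ≫ Γ.unitApp M)
    (hpbM.of_iso (Iso.refl P) (asIso (Γ.unitApp M)) (Iso.refl E') (Iso.refl _) ?_ ?_ ?_ ?_)
  all_goals simp [hm₂ψ]

lemma IsSplitBy.comp {Γ : GaloisStructure C X} (hadm : Γ.Admissible) {A B E' E'' : C}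
    {f : A ⟶ B} (hf : Γ.E f) {g : E' ⟶ B} (hs : Γ.IsSplitBy f g) (h : E'' ⟶ E') :
    Γ.IsSplitBy f (h ≫ g) := by
  intro P p₁ p₂ hP
  obtain ⟨⟨Q, q₁, q₂, -, hQ, -⟩, -⟩ := Γ.hE2 f hf g trivial
  exact (hs q₁ q₂ hQ).of_isPullback hadm (hP.of_right' hQ)

lemma Covering.isSplitBy_of_factors {Γ : GaloisStructure C X} (hadm : Γ.Admissible)
    (hN : ∀ ⦃A B : C⦄ (f : A ⟶ B), Γ.Covering f → Γ.NormalExt f)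
    {A B E' : C} {f : A ⟶ B} (hf : Γ.Covering f) {p : E' ⟶ B} (h : E' ⟶ A)
    (hp : h ≫ f = p) : Γ.IsSplitBy f p :=
  hp ▸ (hN f hf).2.comp hadm hf.1 h

end GaloisStructure

open GaloisStructure in
/-- Let `Γ` be admissible, with every morphism of `E` a monadic
extension and every covering a normal extension.  If `p : E' ⟶ B` lies in `E`,
`f : A ⟶ B` is a covering and `h : E' ⟶ A` satisfies `f ∘ h = p`, then `(A, f)` is
split by `(E', p)`; consequently any reflection of `(E', p)` into `Spl(E', p)` is
also a reflection of `(E', p)` into `Cov(B)`. -/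
theorem statement_3 {C : Type u} [Category.{v} C] {X : Type u'} [Category.{v'} X]
    (Γ : GaloisStructure C X) (hadm : Γ.Admissible) (hM : Γ.CondM)
    (hN : ∀ ⦃A B : C⦄ (f : A ⟶ B), Γ.Covering f → Γ.NormalExt f)
    {E' A B : C} (p : E' ⟶ B) (hp : Γ.E p) (f : A ⟶ B) (hf : Γ.Covering f)
    (h : E' ⟶ A) (hcomm : h ≫ f = p) :
    Γ.IsSplitBy f p ∧
      ∀ (r : Over B) (u : Over.mk p ⟶ r),
        IsReflectionInto (fun a : Over B => Γ.E a.hom ∧ Γ.IsSplitBy a.hom p) u →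
        IsReflectionInto (fun a : Over B => Γ.Covering a.hom) u := by
  refine ⟨hf.isSplitBy_of_factors hadm hN h hcomm, fun r u hu => hu.of_imp ?_ ?_⟩
  · exact ⟨hu.1.1, E', p, hM p hp, hu.1.2⟩
  · exact fun a ha k => ⟨ha.1, ha.isSplitBy_of_factors hadm hN k.left (Over.w k)⟩

end GaloisPaper
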